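/- arXiv:1608.08678 — 11 statements merged into one kernel-verified Lean document; each statement's English description precedes it below -/
import Mathlib

section
/- For a rational matrix A ∈ ℚ^{m×n}, A is (s,ℤⁿ,0)-good if and only if A is (s,ℝⁿ,0)-good. -/
/-!
Both conditions say that the kernel of `A` contains no nonzero vector with at most `2s` nonzero
entries (over `ℤ`, resp. `ℝ`), since such a vector is exactly a difference of two `s`-sparse
vectors. A real kernel vector supported on `S` yields a rational one supported on `S`, because
linear independence of the columns of `A` indexed by `S` does not change when passing from `ℚ`
to `ℝ`; clearing denominators makes it integral.
-/

open scoped Classical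

open Finset Matrix

section Sparse

variable {ι G H : Type*} [Fintype ι] [AddCommGroup G] [DecidableEq G]

def IsSparseInjective (s : ℕ) (f : (ι → G) → H) : Prop :=
  ∀ xhat : ι → G, #{i | xhat i ≠ 0} ≤ s →
    ∀ x : ι → G, #{i | x i ≠ 0} ≤ s → f x = f xhat → x = xhat

lemma card_support_le_of_imp {K L : Type*} [Zero K] [Zero L] [DecidableEq K] [DecidableEq L]
    {v : ι → K} {w : ι → L} (h : ∀ i, v i = 0 → w i = 0) : #{i | w i ≠ 0} ≤ #{i | v i ≠ 0} :=
  card_le_card <| monotone_filter_right _ fun i _ hw hv => hw (h i hv)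

lemma card_support_sub_le (x y : ι → G) :
    #{i | (x - y) i ≠ 0} ≤ #{i | x i ≠ 0} + #{i | y i ≠ 0} := by
  refine (card_le_card fun i => ?_).trans (card_union_le _ _)
  simp only [mem_filter, mem_univ, true_and, mem_union, Pi.sub_apply]
  contrapose!
  rintro ⟨hx, hy⟩
  rw [hx, hy, sub_zero]

lemma exists_sub_eq_of_card_support_le {s t : ℕ} {v : ι → G}
    (hv : #{i | v i ≠ 0} ≤ s + t) :
    ∃ x y : ι → G, #{i | x i ≠ 0} ≤ s ∧ #{i | y i ≠ 0} ≤ t ∧ x - y = v := by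
  set S : Finset ι := {i | v i ≠ 0}
  obtain ⟨T, hTS, hT⟩ := exists_subset_card_eq (min_le_right s #S)
  let x : ι → G := fun i => if i ∈ T then v i else 0
  refine ⟨x, x - v, ?_, ?_, sub_sub_cancel x v⟩
  · refine (card_le_card fun i hi => ?_).trans (hT.trans_le (min_le_left _ _))
    by_contra hiT
    simp [x, hiT] at hi
  · calc #{i | (x - v) i ≠ 0} ≤ #(S \ T) := card_le_card fun i hi => by
          by_cases hiT : i ∈ T <;> simp_all [x, S]
      _ = #S - #T := card_sdiff_of_subset hTS
      _ ≤ t := by omega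

lemma isSparseInjective_iff [AddGroup H] {s : ℕ} (f : (ι → G) →+ H) :
    IsSparseInjective s f ↔ ∀ v : ι → G, #{i | v i ≠ 0} ≤ s + s → f v = 0 → v = 0 := by
  constructor
  · rintro hf v hv hfv
    obtain ⟨x, y, hx, hy, rfl⟩ := exists_sub_eq_of_card_support_le hv
    rw [map_sub, sub_eq_zero] at hfv
    rw [hf y hy x hx hfv, sub_self]
  · intro h xhat hxhat x hx hfx
    refine sub_eq_zero.mp (h _ ((card_support_sub_le x xhat).trans (add_le_add hx hxhat)) ?_)
    rw [map_sub, hfx, sub_self]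

end Sparse

namespace Matrix

variable {I J R S : Type*} [Fintype J]

theorem exists_mulVec_eq_zero_iff_not_linearIndependent_col [CommRing R] (M : Matrix I J R) :
    (∃ v ≠ 0, M *ᵥ v = 0) ↔ ¬ LinearIndependent R M.col := by
  rw [← mulVec_injective_iff, ← coe_mulVecLin, injective_iff_map_eq_zero]
  push Not
  exact exists_congr fun v => and_comm

theorem exists_mulVec_map_algebraMap_eq_zero_iff [Finite I] [CommRing R] [CommRing S]
    [Algebra R S] [FaithfulSMul R S] [IsDomain S] (M : Matrix I J R) :
    (∃ v ≠ 0, M.map (algebraMap R S) *ᵥ v = 0) ↔ ∃ w ≠ 0, M *ᵥ w = 0 := by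
  rw [exists_mulVec_eq_zero_iff_not_linearIndependent_col,
    exists_mulVec_eq_zero_iff_not_linearIndependent_col,
    ← linearIndependent_algebraMap_comp_iff (R := R) (S := S)]
  rfl

theorem exists_mulVec_eq_zero_of_map_algebraMap [Finite I] [DecidableEq J] [CommRing R]
    [CommRing S] [Algebra R S] [FaithfulSMul R S] [IsDomain S] (M : Matrix I J R) {v : J → S}
    (hv : v ≠ 0) (hMv : M.map (algebraMap R S) *ᵥ v = 0) :
    ∃ w ≠ 0, M *ᵥ w = 0 ∧ ∀ j, v j = 0 → w j = 0 := by
  -- Appending the rows `e_j` for `v j = 0` makes "vanishes off the support of `v`" part of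
  -- the kernel condition.
  let d : J → R := fun j => if v j = 0 then 1 else 0
  obtain ⟨w, hw, hNw⟩ := (exists_mulVec_map_algebraMap_eq_zero_iff (fromRows M (diagonal d))).mp
    ⟨v, hv, by
      rw [fromRows_map, diagonal_map (map_zero _), fromRows_mulVec, hMv]
      ext (i | j)
      · rfl
      · simp [mulVec_diagonal, d, apply_ite]⟩
  rw [fromRows_mulVec] at hNw
  refine ⟨w, hw, funext fun i => congrFun hNw (.inl i), fun j hj => ?_⟩
  simpa [mulVec_diagonal, d, hj] using congrFun hNw (.inr j)

end Matrix

lemma exists_intCast_eq_mul {J : Type*} [Finite J] (w : J → ℚ) :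
    ∃ c : ℤ, c ≠ 0 ∧ ∃ z : J → ℤ, ∀ j, (z j : ℚ) = c * w j := by
  obtain ⟨⟨c, hc⟩, hcw⟩ := IsLocalization.exist_integer_multiples_of_finite (nonZeroDivisors ℤ) w
  choose z hz using hcw
  exact ⟨c, nonZeroDivisors.ne_zero hc, z, fun j => by simpa [zsmul_eq_mul] using hz j⟩

theorem Matrix.exists_int_mulVec_eq_zero_of_real {I J : Type*} [Finite I] [Fintype J]
    [DecidableEq J] (A : Matrix I J ℚ) {v : J → ℝ} (hv : v ≠ 0)
    (hAv : A.map ((↑) : ℚ → ℝ) *ᵥ v = 0) :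
    ∃ z : J → ℤ, z ≠ 0 ∧ A.map ((↑) : ℚ → ℝ) *ᵥ (fun j => (z j : ℝ)) = 0 ∧
      ∀ j, v j = 0 → z j = 0 := by
  obtain ⟨w, hw, hAw, hwv⟩ := A.exists_mulVec_eq_zero_of_map_algebraMap hv hAv
  obtain ⟨c, hc, z, hz⟩ := exists_intCast_eq_mul w
  have hAz : A *ᵥ (fun j => (z j : ℚ)) = 0 := by
    rw [show (fun j => (z j : ℚ)) = c • w from funext hz, mulVec_smul, hAw, smul_zero]
  refine ⟨z, fun h => hw (funext fun j => ?_), funext fun i => ?_, fun j hj => ?_⟩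
  · simpa [h, hc] using hz j
  · calc (A.map (↑) *ᵥ fun j => (z j : ℝ)) i = ((A *ᵥ fun j => (z j : ℚ)) i : ℝ) := by
          simp [mulVec, dotProduct]
      _ = 0 := by simp [hAz]
  · exact Int.cast_eq_zero.mp ((hz j).trans (by rw [hwv j hj, mul_zero]))

theorem stmt4 (m n s : ℕ) (A : Matrix (Fin m) (Fin n) ℚ) :
    (∀ xhat : Fin n → ℤ, (Finset.univ.filter fun i => xhat i ≠ 0).card ≤ s →
      ∀ x : Fin n → ℤ, (Finset.univ.filter fun i => x i ≠ 0).card ≤ s →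
        (A.map ((↑) : ℚ → ℝ)).mulVec (fun j => (x j : ℝ)) =
          (A.map ((↑) : ℚ → ℝ)).mulVec (fun j => (xhat j : ℝ)) → x = xhat)
    ↔ (∀ xhat : Fin n → ℝ, (Finset.univ.filter fun i => xhat i ≠ 0).card ≤ s →
      ∀ x : Fin n → ℝ, (Finset.univ.filter fun i => x i ≠ 0).card ≤ s →
        (A.map ((↑) : ℚ → ℝ)).mulVec x = (A.map ((↑) : ℚ → ℝ)).mulVec xhat → x = xhat) := by
  let A' := A.map ((↑) : ℚ → ℝ)
  let castMulVec : (Fin n → ℤ) →+ (Fin m → ℝ) :=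
    A'.mulVecLin.toAddMonoidHom.comp ((Int.castAddHom ℝ).compLeft (Fin n))
  change IsSparseInjective s castMulVec ↔ IsSparseInjective s A'.mulVecLin.toAddMonoidHom
  rw [isSparseInjective_iff, isSparseInjective_iff]
  constructor
  · intro hZ v hv hAv
    by_contra hv0
    obtain ⟨z, hz0, hAz, hzv⟩ := A.exists_int_mulVec_eq_zero_of_real hv0 hAv
    exact hz0 (hZ z ((card_support_le_of_imp hzv).trans hv) hAz)
  · intro hR z hz hAz
    have hz' := (card_support_le_of_imp (w := fun j => (z j : ℝ)) fun j hj => by simp [hj]).trans hz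
    have hcast := hR _ hz' hAz
    exact funext fun j => Int.cast_eq_zero.mp (congrFun hcast j)
end

section
/- Let u ∈ ℤⁿ with u ≥ 0 and X = {x ∈ ℤⁿ : 0 ≤ x ≤ u}. A matrix A ∈ ℝ^{m×n} is (s,X,0)-good if and only if the only z ∈ ℤⁿ with Az = 0, -u ≤ z ≤ u, |{i : zᵢ > 0}| ≤ s and |{i : zᵢ < 0}| ≤ s is z = 0. -/
theorem stmt6 (m n s : ℕ) (A : Matrix (Fin m) (Fin n) ℝ)
    (u : Fin n → ℤ) (hu : ∀ i, 0 ≤ u i) :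
    (∀ xhat : Fin n → ℤ, (∀ i, 0 ≤ xhat i ∧ xhat i ≤ u i) →
      (Finset.univ.filter fun i => xhat i ≠ 0).card ≤ s →
      ∀ x : Fin n → ℤ, (∀ i, 0 ≤ x i ∧ x i ≤ u i) →
        (Finset.univ.filter fun i => x i ≠ 0).card ≤ s →
        A.mulVec (fun j => (x j : ℝ)) = A.mulVec (fun j => (xhat j : ℝ)) → x = xhat)
    ↔ (∀ z : Fin n → ℤ, A.mulVec (fun j => (z j : ℝ)) = 0 →
        (∀ i, -u i ≤ z i ∧ z i ≤ u i) →
        (Finset.univ.filter fun i => 0 < z i).card ≤ s →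
        (Finset.univ.filter fun i => z i < 0).card ≤ s → z = 0) := by
  constructor
  · intro hgood z hz hb hp hn
    set x : Fin n → ℤ := fun i => max (z i) 0 with hx
    set y : Fin n → ℤ := fun i => max (-z i) 0 with hy
    have hxy : ∀ i, x i - y i = z i := by
      intro i
      simp only [hx, hy]
      rcases le_total (z i) 0 with h | h
      · rw [max_eq_right h, max_eq_left (by linarith)]; ring
      · rw [max_eq_left h, max_eq_right (by linarith)]; ring
    have hsx : (Finset.univ.filter fun i => x i ≠ 0) = Finset.univ.filter fun i => 0 < z i := by
      ext i
      simp only [Finset.mem_filter, hx, Finset.mem_univ, true_and]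
      constructor
      · intro h; rcases lt_trichotomy (z i) 0 with h' | h' | h'
        · exact absurd (max_eq_right h'.le) h
        · exact absurd (by simp [h']) h
        · exact h'
      · intro h; rw [max_eq_left h.le]; exact h.ne'
    have hsy : (Finset.univ.filter fun i => y i ≠ 0) = Finset.univ.filter fun i => z i < 0 := by
      ext i
      simp only [Finset.mem_filter, hy, Finset.mem_univ, true_and]
      constructor
      · intro h; rcases lt_trichotomy (z i) 0 with h' | h' | h'
        · exact h'
        · exact absurd (by simp [h']) h
        · exact absurd (max_eq_right (by linarith)) h
      · intro h; rw [max_eq_left (by linarith)]; intro hc; omega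
    have hAxy : A.mulVec (fun j => (x j : ℝ)) = A.mulVec (fun j => (y j : ℝ)) := by
      have : (fun j => (x j : ℝ)) = (fun j => (y j : ℝ)) + fun j => (z j : ℝ) := by
        funext j
        have := hxy j
        have h2 : (x j : ℝ) - y j = z j := by exact_mod_cast this
        simp only [Pi.add_apply]; linarith
      rw [this, Matrix.mulVec_add, hz, add_zero]
    have := hgood y (fun i => ⟨le_max_right _ _, by have := (hb i).1; simp [hy]; constructor <;> linarith [hu i]⟩)
      (by rw [hsy]; exact hn) x (fun i => ⟨le_max_right _ _, by have := (hb i).2; simp [hx]; constructor <;> linarith [hu i]⟩)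
      (by rw [hsx]; exact hp) hAxy
    funext i
    have h1 := congrFun this i
    have h2 := hxy i
    simp only [Pi.zero_apply]
    omega
  · intro hz xhat hxhat hsxhat x hx hsx hA
    set z : Fin n → ℤ := fun i => x i - xhat i with hzdef
    have h0 : A.mulVec (fun j => (z j : ℝ)) = 0 := by
      have : (fun j => (z j : ℝ)) = (fun j => (x j : ℝ)) - fun j => (xhat j : ℝ) := by
        funext j; simp only [Pi.sub_apply, hzdef]; push_cast; ring
      rw [this, Matrix.mulVec_sub, hA, sub_self]
    have hzz := hz z h0
      (fun i => ⟨by have := (hx i).1; have := (hxhat i).2; simp [hzdef]; linarith,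
        by have := (hx i).2; have := (hxhat i).1; simp [hzdef]; linarith⟩)
      (le_trans (Finset.card_le_card (by
        intro i hi
        simp only [Finset.mem_filter, Finset.mem_univ, true_and, hzdef] at hi ⊢
        have := (hxhat i).1; omega)) hsx)
      (le_trans (Finset.card_le_card (by
        intro i hi
        simp only [Finset.mem_filter, Finset.mem_univ, true_and, hzdef] at hi ⊢
        have := (hx i).1; omega)) hsxhat)
    funext i
    have := congrFun hzz i
    simp [hzdef] at this
    omega
end

section
/- A matrix A ∈ ℝ^{m×n} is (s,ℤ₊ⁿ,0)-good if and only if the only z ∈ ℤⁿ in ker(A) with |{i : zᵢ > 0}| ≤ s and |{i : zᵢ < 0}| ≤ s is z = 0. -/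
theorem stmt7 (m n s : ℕ) (A : Matrix (Fin m) (Fin n) ℝ) :
    (∀ xhat : Fin n → ℤ, (∀ i, 0 ≤ xhat i) →
      (Finset.univ.filter fun i => xhat i ≠ 0).card ≤ s →
      ∀ x : Fin n → ℤ, (∀ i, 0 ≤ x i) →
        (Finset.univ.filter fun i => x i ≠ 0).card ≤ s →
        A.mulVec (fun j => (x j : ℝ)) = A.mulVec (fun j => (xhat j : ℝ)) → x = xhat)
    ↔ (∀ z : Fin n → ℤ, A.mulVec (fun j => (z j : ℝ)) = 0 →
        (Finset.univ.filter fun i => 0 < z i).card ≤ s →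
        (Finset.univ.filter fun i => z i < 0).card ≤ s → z = 0) := by
  constructor
  · intro h z hz hpos hneg
    set x : Fin n → ℤ := fun i => max (z i) 0 with hxdef
    set y : Fin n → ℤ := fun i => max (-(z i)) 0 with hydef
    have hA : A.mulVec (fun j => (x j : ℝ)) = A.mulVec (fun j => (y j : ℝ)) := by
      have heq : (fun j => (x j : ℝ)) = (fun j => (y j : ℝ)) + fun j => (z j : ℝ) := by
        funext j
        simp only [hxdef, hydef, Pi.add_apply]
        have : max (z j) 0 = max (-(z j)) 0 + z j := by omega
        rw [this]; push_cast; ring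
      rw [heq, Matrix.mulVec_add, hz, add_zero]
    have hxs : (Finset.univ.filter fun i => x i ≠ 0).card ≤ s := by
      refine le_trans (Finset.card_le_card ?_) hpos
      intro i hi
      simp only [Finset.mem_filter, Finset.mem_univ, true_and, hxdef] at hi ⊢
      omega
    have hys : (Finset.univ.filter fun i => y i ≠ 0).card ≤ s := by
      refine le_trans (Finset.card_le_card ?_) hneg
      intro i hi
      simp only [Finset.mem_filter, Finset.mem_univ, true_and, hydef] at hi ⊢
      omega
    have hxy := h y (fun i => le_max_right _ _) hys x (fun i => le_max_right _ _) hxs hA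
    funext i
    have := congrFun hxy i
    simp only [hxdef, hydef] at this
    simpa using by omega
  · intro h xhat hxhat hxhs x hx hxs hA
    set z : Fin n → ℤ := fun i => x i - xhat i with hzdef
    have hz : A.mulVec (fun j => (z j : ℝ)) = 0 := by
      have heq : (fun j => (z j : ℝ)) = (fun j => (x j : ℝ)) - fun j => (xhat j : ℝ) := by
        funext j; simp [hzdef]
      rw [heq, Matrix.mulVec_sub, hA, sub_self]
    have h1 : (Finset.univ.filter fun i => 0 < z i).card ≤ s := by
      refine le_trans (Finset.card_le_card ?_) hxs
      intro i hi
      simp only [Finset.mem_filter, Finset.mem_univ, true_and, hzdef] at hi ⊢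
      have := hxhat i; omega
    have h2 : (Finset.univ.filter fun i => z i < 0).card ≤ s := by
      refine le_trans (Finset.card_le_card ?_) hxhs
      intro i hi
      simp only [Finset.mem_filter, Finset.mem_univ, true_and, hzdef] at hi ⊢
      have := hx i; omega
    have hz0 := h z hz h1 h2
    funext i
    have := congrFun hz0 i
    simp only [hzdef, Pi.zero_apply] at this
    omega
end

section
/- Let X = {0,1}ⁿ. A matrix A ∈ ℝ^{m×n} is (s,X,0)-good if and only if the only z ∈ {-1,0,1}ⁿ with Az = 0, |{i : zᵢ = -1}| ≤ s and |{i : zᵢ = 1}| ≤ s is z = 0. -/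
theorem stmt8 (m n s : ℕ) (A : Matrix (Fin m) (Fin n) ℝ) :
    (∀ xhat : Fin n → ℤ, (∀ i, xhat i = 0 ∨ xhat i = 1) →
      (Finset.univ.filter fun i => xhat i ≠ 0).card ≤ s →
      ∀ x : Fin n → ℤ, (∀ i, x i = 0 ∨ x i = 1) →
        (Finset.univ.filter fun i => x i ≠ 0).card ≤ s →
        A.mulVec (fun j => (x j : ℝ)) = A.mulVec (fun j => (xhat j : ℝ)) → x = xhat)
    ↔ (∀ z : Fin n → ℤ, (∀ i, z i = -1 ∨ z i = 0 ∨ z i = 1) →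
        A.mulVec (fun j => (z j : ℝ)) = 0 →
        (Finset.univ.filter fun i => z i = -1).card ≤ s →
        (Finset.univ.filter fun i => z i = 1).card ≤ s → z = 0) := by
  constructor
  · intro h z hz hAz hneg hpos
    set x : Fin n → ℤ := fun i => if z i = 1 then 1 else 0 with hx
    set xh : Fin n → ℤ := fun i => if z i = -1 then 1 else 0 with hxh
    have hbx : ∀ i, x i = 0 ∨ x i = 1 := by
      intro i; by_cases hi : z i = 1 <;> simp [hx, hi]
    have hbxh : ∀ i, xh i = 0 ∨ xh i = 1 := by
      intro i; by_cases hi : z i = -1 <;> simp [hxh, hi]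
    have hcx : (Finset.univ.filter fun i => x i ≠ 0).card ≤ s := by
      refine le_trans (Finset.card_le_card ?_) hpos
      intro i hi
      simp only [Finset.mem_filter, Finset.mem_univ, true_and] at hi ⊢
      by_contra hne
      have : x i = 0 := by simp only [hx]; simp [hne]
      exact hi this
    have hcxh : (Finset.univ.filter fun i => xh i ≠ 0).card ≤ s := by
      refine le_trans (Finset.card_le_card ?_) hneg
      intro i hi
      simp only [Finset.mem_filter, Finset.mem_univ, true_and] at hi ⊢
      by_contra hne
      have : xh i = 0 := by simp only [hxh]; simp [hne]
      exact hi this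
    have hzr : (fun j => ((z j : ℝ))) =
        (fun j => ((x j : ℝ))) - (fun j => ((xh j : ℝ))) := by
      funext j
      rcases hz j with hj | hj | hj <;> simp [hx, hxh, hj]
    have heq : A.mulVec (fun j => (x j : ℝ)) = A.mulVec (fun j => (xh j : ℝ)) := by
      rw [← sub_eq_zero, ← Matrix.mulVec_sub, ← hzr, hAz]
    have hxe := h xh hbxh hcxh x hbx hcx heq
    funext i
    have := congrFun hxe i
    rcases hz i with hi | hi | hi <;> simp [hx, hxh, hi] at this ⊢
  · intro h xhat hbxh hcxh x hbx hcx heq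
    set z : Fin n → ℤ := fun i => x i - xhat i with hzdef
    have hz : ∀ i, z i = -1 ∨ z i = 0 ∨ z i = 1 := by
      intro i; rcases hbx i with h1 | h1 <;> rcases hbxh i with h2 | h2 <;>
        simp [hzdef, h1, h2]
    have hAz : A.mulVec (fun j => (z j : ℝ)) = 0 := by
      have : (fun j => ((z j : ℝ))) =
          (fun j => ((x j : ℝ))) - (fun j => ((xhat j : ℝ))) := by
        funext j; simp [hzdef]
      rw [this, Matrix.mulVec_sub, heq, sub_self]
    have hcneg : (Finset.univ.filter fun i => z i = -1).card ≤ s := by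
      refine le_trans (Finset.card_le_card ?_) hcxh
      intro i hi
      simp only [Finset.mem_filter, Finset.mem_univ, true_and] at hi ⊢
      have hzi : z i = x i - xhat i := rfl
      have h1 := hbx i
      have h2 := hbxh i
      omega
    have hcpos : (Finset.univ.filter fun i => z i = 1).card ≤ s := by
      refine le_trans (Finset.card_le_card ?_) hcx
      intro i hi
      simp only [Finset.mem_filter, Finset.mem_univ, true_and] at hi ⊢
      have hzi : z i = x i - xhat i := rfl
      have h1 := hbx i
      have h2 := hbxh i
      omega
    have hz0 := h z hz hAz hcneg hcpos
    funext i
    have := congrFun hz0 i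
    simp [hzdef, sub_eq_zero] at this
    exact this
end

section
/- Let A ∈ ℝ^{m×n} and S ⊆ {1,…,n}. Every vector x̂ ∈ ℤⁿ with support contained in S is the unique minimizer of ‖x‖₁ over {x ∈ ℤⁿ : Ax = Ax̂} if and only if for every nonzero v ∈ ℤⁿ with Av = 0 it holds that ∑_{i∈S}|vᵢ| < ∑_{i∉S}|vᵢ|. -/
theorem stmt10 (m n : ℕ) (A : Matrix (Fin m) (Fin n) ℝ) (S : Finset (Fin n)) :
    (∀ xhat : Fin n → ℤ, (∀ i, xhat i ≠ 0 → i ∈ S) →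
      ∀ x : Fin n → ℤ,
        A.mulVec (fun j => (x j : ℝ)) = A.mulVec (fun j => (xhat j : ℝ)) →
        x ≠ xhat → ∑ i, |xhat i| < ∑ i, |x i|)
    ↔ (∀ v : Fin n → ℤ, v ≠ 0 → A.mulVec (fun j => (v j : ℝ)) = 0 →
        ∑ i ∈ S, |v i| < ∑ i ∈ Sᶜ, |v i|) := by
  constructor
  · intro h v hv hAv
    set xhat : Fin n → ℤ := fun i => if i ∈ S then v i else 0 with hxhat
    set x : Fin n → ℤ := fun i => if i ∈ S then 0 else -v i with hx
    have hsupp : ∀ i, xhat i ≠ 0 → i ∈ S := by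
      intro i hi; by_contra hS; simp [hxhat, hS] at hi
    have hA : A.mulVec (fun j => (x j : ℝ)) = A.mulVec (fun j => (xhat j : ℝ)) := by
      have heq : (fun j => (x j : ℝ)) =
          (fun j => (xhat j : ℝ)) + (-(fun j => (v j : ℝ))) := by
        funext j; by_cases hj : j ∈ S <;> simp [hx, hxhat, hj]
      rw [heq, Matrix.mulVec_add, Matrix.mulVec_neg, hAv, neg_zero, add_zero]
    have hne : x ≠ xhat := by
      intro he
      apply hv
      funext i
      have hi := congrFun he i
      by_cases hiS : i ∈ S
      · simpa [hx, hxhat, hiS, eq_comm] using hi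
      · simpa [hx, hxhat, hiS, neg_eq_zero] using hi
    have hlt := h xhat hsupp x hA hne
    have e1 : ∑ i, |xhat i| = ∑ i ∈ S, |v i| := by
      rw [← Finset.sum_subset (Finset.subset_univ S)
        (fun i _ hi => by simp [hxhat, hi])]
      exact Finset.sum_congr rfl (fun i hi => by simp [hxhat, hi])
    have e2 : ∑ i, |x i| = ∑ i ∈ Sᶜ, |v i| := by
      rw [← Finset.sum_subset (Finset.subset_univ Sᶜ)
        (fun i _ hi => by simp [hx, (by simpa using hi : i ∈ S)])]
      exact Finset.sum_congr rfl (fun i hi => by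
        simp [hx, (Finset.mem_compl.mp hi)])
    rw [e1, e2] at hlt
    exact hlt
  · intro h xhat hsupp x hA hne
    set v : Fin n → ℤ := x - xhat with hvdef
    have hv0 : v ≠ 0 := by
      intro he
      apply hne
      funext i
      have := congrFun he i
      simpa [hvdef, sub_eq_zero] using this
    have hAv : A.mulVec (fun j => (v j : ℝ)) = 0 := by
      have heq : (fun j => (v j : ℝ)) =
          (fun j => (x j : ℝ)) - (fun j => (xhat j : ℝ)) := by
        funext j; simp [hvdef]
      rw [heq, Matrix.mulVec_sub, hA, sub_self]
    have key := h v hv0 hAv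
    have h1 : ∑ i, |x i| = ∑ i ∈ S, |x i| + ∑ i ∈ Sᶜ, |x i| :=
      (Finset.sum_add_sum_compl S _).symm
    have h2 : ∑ i, |xhat i| = ∑ i ∈ S, |xhat i| := by
      rw [← Finset.sum_subset (Finset.subset_univ S)]
      intro i _ hi
      simp [abs_eq_zero]
      by_contra hc
      exact hi (hsupp i hc)
    have h3 : ∑ i ∈ Sᶜ, |x i| = ∑ i ∈ Sᶜ, |v i| := by
      refine Finset.sum_congr rfl (fun i hi => ?_)
      have h0 : xhat i = 0 := by
        by_contra hc; exact (Finset.mem_compl.mp hi) (hsupp i hc)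
      simp [hvdef, h0]
    have h4 : ∑ i ∈ S, |xhat i| - ∑ i ∈ S, |v i| ≤ ∑ i ∈ S, |x i| := by
      rw [← Finset.sum_sub_distrib]
      refine Finset.sum_le_sum (fun i _ => ?_)
      have htri := abs_sub (x i) (v i)
      have hxi : x i - v i = xhat i := by simp [hvdef]
      rw [hxi] at htri
      linarith
    rw [h1, h3, h2]
    linarith
end

section
/- Let A ∈ ℝ^{m×n} and S ⊆ {1,…,n}. Every vector x̂ ∈ ℤ₊ⁿ with support contained in S is the unique minimizer of ‖x‖₁ over {x ∈ ℤ₊ⁿ : Ax = Ax̂} if and only if for every nonzero v ∈ ℤⁿ with Av = 0 and vᵢ ≥ 0 for all i ∉ S, it holds that ∑ᵢ vᵢ > 0. -/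
theorem stmt11 (m n : ℕ) (A : Matrix (Fin m) (Fin n) ℝ) (S : Finset (Fin n)) :
    (∀ xhat : Fin n → ℤ, (∀ i, 0 ≤ xhat i) → (∀ i, xhat i ≠ 0 → i ∈ S) →
      ∀ x : Fin n → ℤ, (∀ i, 0 ≤ x i) →
        A.mulVec (fun j => (x j : ℝ)) = A.mulVec (fun j => (xhat j : ℝ)) →
        x ≠ xhat → ∑ i, |xhat i| < ∑ i, |x i|)
    ↔ (∀ v : Fin n → ℤ, v ≠ 0 → A.mulVec (fun j => (v j : ℝ)) = 0 →
        (∀ i ∉ S, 0 ≤ v i) → 0 < ∑ i, v i) := by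
  constructor
  · intro h v hv hAv hS
    set xhat : Fin n → ℤ := fun i => max (-v i) 0 with hxhat
    set x : Fin n → ℤ := fun i => max (v i) 0 with hx
    have hcast : (fun j => ((x j : ℝ))) = (fun j => ((xhat j : ℝ)) + ((v j : ℝ))) := by
      funext j
      have : x j = xhat j + v j := by
        show max (v j) 0 = max (-v j) 0 + v j; omega
      rw [this]; push_cast; ring
    have hA : A.mulVec (fun j => (x j : ℝ)) = A.mulVec (fun j => (xhat j : ℝ)) := by
      rw [hcast]
      have : (fun j => ((xhat j : ℝ)) + ((v j : ℝ)))
          = (fun j => (xhat j : ℝ)) + (fun j => (v j : ℝ)) := rfl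
      rw [this, Matrix.mulVec_add, hAv, add_zero]
    have hne : x ≠ xhat := by
      intro he
      apply hv
      funext i
      have h2 : max (v i) 0 = max (-v i) 0 := congrFun he i
      show v i = 0
      omega
    have hsupp : ∀ i, xhat i ≠ 0 → i ∈ S := by
      intro i hi
      by_contra hiS
      have h2 := hS i hiS
      have h3 : max (-v i) 0 ≠ 0 := hi
      omega
    have key := h xhat (fun i => le_max_right _ _) hsupp x (fun i => le_max_right _ _) hA hne
    have hsum : ∑ i, v i = ∑ i, |x i| - ∑ i, |xhat i| := by
      rw [← Finset.sum_sub_distrib]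
      apply Finset.sum_congr rfl
      intro i _
      rw [abs_of_nonneg (le_max_right _ _), abs_of_nonneg (le_max_right _ _)]
      show v i = max (v i) 0 - max (-v i) 0; omega
    omega
  · intro h xhat hx0 hsupp x hx0' hA hne
    set v : Fin n → ℤ := fun i => x i - xhat i with hvdef
    have hv : v ≠ 0 := by
      intro he
      apply hne
      funext i
      have := congrFun he i
      simp only [hvdef, Pi.zero_apply] at this
      omega
    have hAv : A.mulVec (fun j => (v j : ℝ)) = 0 := by
      have : (fun j => ((v j : ℝ))) = (fun j => (x j : ℝ)) - (fun j => (xhat j : ℝ)) := by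
        funext j; simp only [hvdef, Pi.sub_apply]; push_cast; ring
      rw [this, Matrix.mulVec_sub, hA, sub_self]
    have hSv : ∀ i ∉ S, 0 ≤ v i := by
      intro i hiS
      have hxi : xhat i = 0 := by
        by_contra hc
        exact hiS (hsupp i hc)
      simp only [hvdef, hxi, sub_zero]
      exact hx0' i
    have key := h v hv hAv hSv
    have hsum : ∑ i, v i = ∑ i, |x i| - ∑ i, |xhat i| := by
      rw [← Finset.sum_sub_distrib]
      apply Finset.sum_congr rfl
      intro i _
      rw [abs_of_nonneg (hx0' i), abs_of_nonneg (hx0 i)]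
    omega
end

section
/- For A ∈ ℚ^{m×n} and S ⊆ {1,…,n}: the condition [∀ nonzero v ∈ ℤⁿ ∩ ker(A): ∑_{i∈S}|vᵢ| < ∑_{i∉S}|vᵢ|] holds if and only if [∀ nonzero v ∈ ℝⁿ ∩ ker(A): ∑_{i∈S}|vᵢ| < ∑_{i∉S}|vᵢ|]. -/
/-!
Clearing denominators shows that the integral and the rational versions of the condition agree, so
it suffices to turn a real kernel vector `v` violating the inequality into a rational one. Extend
the coordinate functionals of a `ℚ`-basis `b` of the `ℚ`-span of the entries of `v` to `ℚ`-linear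
maps `ψ j : ℝ → ℚ`. Then `v = ∑ j, b j • (ψ j ∘ v)`, and each `ψ j ∘ v` satisfies every rational
linear relation satisfied by `v`; replacing the `b j` by nearby rationals gives rational vectors
arbitrarily close to `v` with the same rational relations, in particular in the kernel and with
the same zero set. Near `v`, on vectors with that zero set, `∑ i ∈ Sᶜ, |x i| - ∑ i ∈ S, |x i|` is
a rational linear form in `x`, nonpositive at `v`: either it is negative there, an open condition,
or it vanishes, a rational relation.
-/

open Finset Matrix

theorem sum_compl_sub_sum_eq_sum_ite {κ α : Type*} [Fintype κ] [DecidableEq κ] [AddCommGroup α]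
    (S : Finset κ) (f : κ → α) :
    ∑ i ∈ Sᶜ, f i - ∑ i ∈ S, f i = ∑ i, if i ∈ S then -f i else f i := by
  rw [Finset.sum_ite, sum_neg_distrib, Finset.filter_mem_eq_inter, univ_inter, sub_eq_neg_add]
  congr 2
  ext; simp

theorem abs_eq_sign_mul_of_pos_mul {α : Type*} [Ring α] [LinearOrder α] [IsStrictOrderedRing α]
    {x y : α} (h : 0 < x * y) : |x| = SignType.sign y * x := by
  rcases pos_and_pos_or_neg_and_neg_of_mul_pos h with ⟨hx, hy⟩ | ⟨hx, hy⟩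
  · simp [sign_pos hy, abs_of_pos hx]
  · simp [sign_neg hy, abs_of_neg hx]

theorem sum_abs_mul_lt_iff {κ α : Type*} [Ring α] [LinearOrder α] [IsStrictOrderedRing α]
    {c : α} (hc : c ≠ 0) (x : κ → α) (s t : Finset κ) :
    ∑ i ∈ s, |c * x i| < ∑ i ∈ t, |c * x i| ↔ ∑ i ∈ s, |x i| < ∑ i ∈ t, |x i| := by
  simp only [abs_mul, ← mul_sum]
  exact mul_lt_mul_iff_right₀ (abs_pos.2 hc)

theorem exists_intCast_eq_mul_ratCast {κ K : Type*} [Finite κ] [DivisionRing K] [CharZero K]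
    (w : κ → ℚ) : ∃ c : ℤ, c ≠ 0 ∧ ∃ z : κ → ℤ, ∀ i, (z i : K) = c * w i := by
  obtain ⟨⟨c, hc⟩, hcw⟩ := IsLocalization.exist_integer_multiples_of_finite (nonZeroDivisors ℤ) w
  choose z hz using hcw
  refine ⟨c, nonZeroDivisors.ne_zero hc, z, fun i => ?_⟩
  simpa using congrArg ((↑) : ℚ → K) (hz i)

theorem IsOpen.exists_ratCast_mem_preserving_relations {κ : Type*} [Fintype κ]
    {U : Set (κ → ℝ)} (hU : IsOpen U) {v : κ → ℝ} (hv : v ∈ U) :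
    ∃ w : κ → ℚ, (fun i => (w i : ℝ)) ∈ U ∧
      ∀ c : κ → ℚ, ∑ i, (c i : ℝ) * v i = 0 → ∑ i, (c i : ℝ) * w i = 0 := by
  let V := Submodule.span ℚ (Set.range v)
  have : FiniteDimensional ℚ V := .span_of_finite ℚ (Set.finite_range v)
  let b := Module.finBasis ℚ V
  choose ψ hψ using fun j => LinearMap.exists_extend (b.coord j)
  have hv_eq : ∀ i, ∑ j, (ψ j (v i) : ℝ) * b j = v i := fun i => by
    have hvi : v i ∈ V := Submodule.subset_span ⟨i, rfl⟩
    have := congrArg Subtype.val (b.sum_repr ⟨v i, hvi⟩)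
    simp only [Submodule.coe_sum, Submodule.coe_smul, Rat.smul_def] at this
    convert this using 3 with j
    rw [← b.coord_apply, ← hψ j]
    rfl
  let F : (Fin (Module.finrank ℚ V) → ℝ) → κ → ℝ := fun t i => ∑ j, (ψ j (v i) : ℝ) * t j
  have hF : Continuous F := by fun_prop
  obtain ⟨t, ht⟩ := (DenseRange.piMap fun _ => Rat.denseRange_cast).exists_mem_open
    (hU.preimage hF) ⟨fun j => b j, by simpa [F, hv_eq] using hv⟩
  refine ⟨fun i => ∑ j, ψ j (v i) * t j, by simpa [F] using ht, fun c hc => ?_⟩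
  have hψc : ∀ j, ∑ i, c i * ψ j (v i) = 0 := fun j => by
    simpa [← Rat.smul_def, map_sum] using congrArg (ψ j) hc
  have : ∑ i, c i * ∑ j, ψ j (v i) * t j = 0 := calc
    _ = ∑ j, (∑ i, c i * ψ j (v i)) * t j := by
      simp only [Finset.mul_sum, Finset.sum_mul, mul_assoc]; exact Finset.sum_comm
    _ = 0 := by simp [hψc]
  exact_mod_cast this

theorem exists_ratCast_mulVec_eq_zero_of_sum_abs_le {ι κ : Type*} [Fintype ι] [Fintype κ]
    [DecidableEq κ] (A : Matrix ι κ ℚ) (S : Finset κ) {v : κ → ℝ} (hv0 : v ≠ 0)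
    (hAv : A.map ((↑) : ℚ → ℝ) *ᵥ v = 0) (hle : ∑ i ∈ Sᶜ, |v i| ≤ ∑ i ∈ S, |v i|) :
    ∃ w : κ → ℚ, (fun i => (w i : ℝ)) ≠ 0 ∧ A.map ((↑) : ℚ → ℝ) *ᵥ (fun i => (w i : ℝ)) = 0 ∧
      ∑ i ∈ Sᶜ, |(w i : ℝ)| ≤ ∑ i ∈ S, |(w i : ℝ)| := by
  have hcast : ∀ s : SignType, ((s : ℚ) : ℝ) = s := SignType.map_cast (Rat.castHom ℝ)
  let τ : κ → ℚ := fun i => if i ∈ S then -(SignType.sign (v i) : ℚ) else SignType.sign (v i)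
  let f : (κ → ℝ) → ℝ := fun x => ∑ i, (τ i : ℝ) * x i
  have hf : ∀ x : κ → ℝ, (∀ i, |x i| = SignType.sign (v i) * x i) →
      f x = ∑ i ∈ Sᶜ, |x i| - ∑ i ∈ S, |x i| := fun x hx => by
    simp only [f, τ, sum_compl_sub_sum_eq_sum_ite, hx]
    refine sum_congr rfl fun i _ => ?_
    split_ifs <;> push_cast [hcast] <;> ring
  let U : Set (κ → ℝ) := {x | (∀ i, v i ≠ 0 → 0 < x i * v i) ∧ (f x < 0 ∨ f v = 0)}
  have hU : IsOpen U := by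
    have hf_cont : Continuous f := by fun_prop
    refine IsOpen.inter (s := {x | ∀ i, v i ≠ 0 → 0 < x i * v i}) ?_
      ((isOpen_lt hf_cont continuous_const).union (isOpen_const (p := f v = 0)))
    simp only [Set.ofPred_forall]
    exact isOpen_iInter_of_finite fun i => isOpen_iInter_of_finite fun _ =>
      isOpen_lt continuous_const (by fun_prop)
  have hvU : v ∈ U := by
    refine ⟨fun i hi => mul_self_pos.2 hi, ?_⟩
    rw [hf v fun i => (sign_mul_self _).symm]
    exact (sub_nonpos.2 hle).lt_or_eq
  obtain ⟨w, ⟨hsign, hfw⟩, hrel⟩ := hU.exists_ratCast_mem_preserving_relations hvU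
  have hw0 : ∀ i, v i = 0 → (w i : ℝ) = 0 := fun i hi => by
    have hsingle : ∀ x : κ → ℝ, ∑ j, ((Pi.single i 1 : κ → ℚ) j : ℝ) * x j = x i := fun x => by
      simp [Pi.single_apply, apply_ite ((↑) : ℚ → ℝ)]
    simpa [hsingle] using hrel (Pi.single i 1) (by rw [hsingle, hi])
  have habs : ∀ i, |(w i : ℝ)| = SignType.sign (v i) * w i := fun i => by
    by_cases hi : v i = 0
    · simp [hw0 i hi]
    · exact abs_eq_sign_mul_of_pos_mul (hsign i hi)
  refine ⟨w, fun h => ?_, ?_, ?_⟩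
  · obtain ⟨i, hi⟩ := Function.ne_iff.1 hv0
    simpa [congrFun h i] using hsign i hi
  · ext k
    have := hrel (A k) (by simpa [mulVec, dotProduct] using congrFun hAv k)
    simpa [mulVec, dotProduct] using this
  · rw [← sub_nonpos, ← hf _ habs]
    rcases hfw with h | h
    · exact h.le
    · exact (hrel τ h).le

theorem stmt12 (m n : ℕ) (A : Matrix (Fin m) (Fin n) ℚ) (S : Finset (Fin n)) :
    (∀ v : Fin n → ℤ, v ≠ 0 →
      (A.map ((↑) : ℚ → ℝ)).mulVec (fun j => (v j : ℝ)) = 0 →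
      ∑ i ∈ S, |v i| < ∑ i ∈ Sᶜ, |v i|)
    ↔ (∀ v : Fin n → ℝ, v ≠ 0 → (A.map ((↑) : ℚ → ℝ)).mulVec v = 0 →
        ∑ i ∈ S, |v i| < ∑ i ∈ Sᶜ, |v i|) := by
  refine ⟨fun hZ v hv0 hAv => ?_, fun hR z hz0 hAz => ?_⟩
  · by_contra! hle
    obtain ⟨w, hw0, hAw, hwle⟩ := exists_ratCast_mulVec_eq_zero_of_sum_abs_le A S hv0 hAv hle
    obtain ⟨c, hc, z, hz⟩ := exists_intCast_eq_mul_ratCast (K := ℝ) w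
    have hc0 : (c : ℝ) ≠ 0 := Int.cast_ne_zero.2 hc
    have hzw : (fun i => (z i : ℝ)) = (c : ℝ) • fun i => (w i : ℝ) := funext hz
    have hz0 : z ≠ 0 := by
      rintro rfl
      exact hw0 (funext fun i => by simpa [hc0, eq_comm] using hz i)
    have hlt : ∑ i ∈ S, |(z i : ℝ)| < ∑ i ∈ Sᶜ, |(z i : ℝ)| := by
      exact_mod_cast hZ z hz0 (by rw [hzw, mulVec_smul, hAw, smul_zero])
    simp only [hz, sum_abs_mul_lt_iff hc0] at hlt
    exact hwle.not_gt hlt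
  · exact_mod_cast hR _ (fun h => hz0 (funext fun i => by simpa using congrFun h i)) hAz
end

section
/- Let A ∈ ℝ^{m×n}, ℓ ≤ 0 ≤ u in ℤⁿ, and S ⊆ {1,…,n}. If for every nonzero z ∈ ℤⁿ with Az = 0 and ℓ - u ≤ z ≤ u - ℓ it holds that ∑_{i∈S}|zᵢ| < ∑_{i∉S}|zᵢ|, then every x̂ ∈ ℤⁿ with ℓ ≤ x̂ ≤ u and support contained in S is the unique minimizer of ‖x‖₁ over {x ∈ ℤⁿ : ℓ ≤ x ≤ u, Ax = Ax̂}. -/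
theorem stmt13 (m n : ℕ) (A : Matrix (Fin m) (Fin n) ℝ)
    (l u : Fin n → ℤ) (hl : ∀ i, l i ≤ 0) (hu : ∀ i, 0 ≤ u i)
    (S : Finset (Fin n))
    (hnsp : ∀ z : Fin n → ℤ, z ≠ 0 → A.mulVec (fun j => (z j : ℝ)) = 0 →
      (∀ i, l i - u i ≤ z i ∧ z i ≤ u i - l i) →
      ∑ i ∈ S, |z i| < ∑ i ∈ Sᶜ, |z i|) :
    ∀ xhat : Fin n → ℤ, (∀ i, l i ≤ xhat i ∧ xhat i ≤ u i) → (∀ i, xhat i ≠ 0 → i ∈ S) →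
      ∀ x : Fin n → ℤ, (∀ i, l i ≤ x i ∧ x i ≤ u i) →
        A.mulVec (fun j => (x j : ℝ)) = A.mulVec (fun j => (xhat j : ℝ)) →
        x ≠ xhat → ∑ i, |xhat i| < ∑ i, |x i| := by
  intro xhat hxh hs x hxb hAx hne
  set z : Fin n → ℤ := fun i => xhat i - x i with hzdef
  have hz0 : z ≠ 0 := by
    intro h
    apply hne
    funext i
    have := congrFun h i
    simp only [hzdef, Pi.zero_apply, sub_eq_zero] at this
    exact this.symm
  have hAz : A.mulVec (fun j => (z j : ℝ)) = 0 := by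
    have heq : (fun j => ((z j : ℝ))) =
        (fun j => (xhat j : ℝ)) - (fun j => (x j : ℝ)) := by
      funext j; simp [hzdef]
    rw [heq, A.mulVec_sub, hAx, sub_self]
  have hb : ∀ i, l i - u i ≤ z i ∧ z i ≤ u i - l i := by
    intro i
    have h1 := hxh i; have h2 := hxb i
    simp only [hzdef]
    omega
  have key := hnsp z hz0 hAz hb
  have hcomp0 : ∀ i ∈ Sᶜ, xhat i = 0 := by
    intro i hi
    by_contra h
    exact (Finset.mem_compl.mp hi) (hs i h)
  have e1 : ∑ i ∈ Sᶜ, |xhat i| = 0 :=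
    Finset.sum_eq_zero (fun i hi => by rw [hcomp0 i hi]; simp)
  have e2 : ∑ i ∈ Sᶜ, |z i| = ∑ i ∈ Sᶜ, |x i| :=
    Finset.sum_congr rfl (fun i hi => by
      simp [hzdef, hcomp0 i hi])
  have e3 : ∑ i ∈ S, |xhat i| ≤ ∑ i ∈ S, |x i| + ∑ i ∈ S, |z i| := by
    rw [← Finset.sum_add_distrib]
    refine Finset.sum_le_sum (fun i _ => ?_)
    have : xhat i = x i + z i := by simp [hzdef]
    rw [this]
    exact abs_add_le _ _
  have split1 : ∑ i, |xhat i| = ∑ i ∈ S, |xhat i| + ∑ i ∈ Sᶜ, |xhat i| :=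
    (Finset.sum_add_sum_compl S _).symm
  have split2 : ∑ i, |x i| = ∑ i ∈ S, |x i| + ∑ i ∈ Sᶜ, |x i| :=
    (Finset.sum_add_sum_compl S _).symm
  rw [split1, split2, e1, add_zero, ← e2]
  omega
end

section
/- Let A ∈ ℝ^{m×n}, u ∈ ℤⁿ with u ≥ 0, and S ⊆ {1,…,n}. Every x̂ ∈ ℤⁿ with 0 ≤ x̂ ≤ u and support contained in S is the unique minimizer of ‖x‖₁ over {x ∈ ℤⁿ : 0 ≤ x ≤ u, Ax = Ax̂} if and only if for every nonzero v ∈ ℤⁿ with Av = 0, -u ≤ v ≤ u, and vᵢ ≥ 0 for all i ∉ S, it holds that ∑ᵢ vᵢ > 0. -/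
theorem stmt14 (m n : ℕ) (A : Matrix (Fin m) (Fin n) ℝ)
    (u : Fin n → ℤ) (hu : ∀ i, 0 ≤ u i) (S : Finset (Fin n)) :
    (∀ xhat : Fin n → ℤ, (∀ i, 0 ≤ xhat i ∧ xhat i ≤ u i) → (∀ i, xhat i ≠ 0 → i ∈ S) →
      ∀ x : Fin n → ℤ, (∀ i, 0 ≤ x i ∧ x i ≤ u i) →
        A.mulVec (fun j => (x j : ℝ)) = A.mulVec (fun j => (xhat j : ℝ)) →
        x ≠ xhat → ∑ i, |xhat i| < ∑ i, |x i|)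
    ↔ (∀ v : Fin n → ℤ, v ≠ 0 → A.mulVec (fun j => (v j : ℝ)) = 0 →
        (∀ i, -u i ≤ v i ∧ v i ≤ u i) → (∀ i ∉ S, 0 ≤ v i) →
        0 < ∑ i, v i) := by
  constructor
  · intro H v hv hAv hb hs
    set xp : Fin n → ℤ := fun i => max (v i) 0 with hxp
    set xm : Fin n → ℤ := fun i => max (-v i) 0 with hxm
    have hvd : ∀ i, v i = xp i - xm i := fun i => by simp only [hxp, hxm]; omega
    have hb1 : ∀ i, 0 ≤ xm i ∧ xm i ≤ u i := fun i => by
      have := hb i; simp only [hxm]; omega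
    have hb2 : ∀ i, 0 ≤ xp i ∧ xp i ≤ u i := fun i => by
      have := hb i; simp only [hxp]; omega
    have hsupp : ∀ i, xm i ≠ 0 → i ∈ S := by
      intro i hi
      by_contra hnot
      have := hs i hnot
      simp only [hxm] at hi
      omega
    have hcast : (fun j => ((xp j : ℝ))) = (fun j => ((xm j : ℝ))) + (fun j => ((v j : ℝ))) := by
      funext j
      have := hvd j
      simp only [Pi.add_apply]
      have : (xp j : ℝ) = (xm j : ℝ) + (v j : ℝ) := by push_cast; exact_mod_cast congrArg (fun t : ℤ => (t : ℝ)) (by omega : xp j = xm j + v j)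
      linarith
    have hAeq : A.mulVec (fun j => ((xp j : ℝ))) = A.mulVec (fun j => ((xm j : ℝ))) := by
      rw [hcast, Matrix.mulVec_add, hAv, add_zero]
    have hne : xp ≠ xm := by
      intro h
      apply hv
      funext i
      have := congrFun h i
      have := hvd i
      simp only [Pi.zero_apply]
      omega
    have := H xm hb1 hsupp xp hb2 hAeq hne
    have e1 : ∑ i, |xm i| = ∑ i, xm i := Finset.sum_congr rfl fun i _ => abs_of_nonneg (hb1 i).1
    have e2 : ∑ i, |xp i| = ∑ i, xp i := Finset.sum_congr rfl fun i _ => abs_of_nonneg (hb2 i).1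
    have e3 : ∑ i, v i = ∑ i, xp i - ∑ i, xm i := by
      rw [← Finset.sum_sub_distrib]
      exact Finset.sum_congr rfl fun i _ => hvd i
    omega
  · intro H xhat hxb hxs x hxb' hAeq hne
    set v : Fin n → ℤ := fun i => x i - xhat i with hv
    have hv0 : v ≠ 0 := by
      intro h
      apply hne
      funext i
      have := congrFun h i
      simp only [hv, Pi.zero_apply] at this ⊢
      omega
    have hAv : A.mulVec (fun j => ((v j : ℝ))) = 0 := by
      have : (fun j => ((v j : ℝ))) = (fun j => ((x j : ℝ))) - (fun j => ((xhat j : ℝ))) := by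
        funext j; simp [hv]
      rw [this, Matrix.mulVec_sub, hAeq, sub_self]
    have hbd : ∀ i, -u i ≤ v i ∧ v i ≤ u i := fun i => by
      have := hxb i; have := hxb' i; simp only [hv]; omega
    have hsn : ∀ i ∉ S, 0 ≤ v i := by
      intro i hi
      have : xhat i = 0 := by by_contra h; exact hi (hxs i h)
      have := (hxb' i).1
      simp only [hv]; omega
    have := H v hv0 hAv hbd hsn
    have e1 : ∑ i, |xhat i| = ∑ i, xhat i := Finset.sum_congr rfl fun i _ => abs_of_nonneg (hxb i).1
    have e2 : ∑ i, |x i| = ∑ i, x i := Finset.sum_congr rfl fun i _ => abs_of_nonneg (hxb' i).1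
    have e3 : ∑ i, v i = ∑ i, x i - ∑ i, xhat i := by
      rw [← Finset.sum_sub_distrib]
    omega
end

section
/- Let A ∈ ℝ^{m×n}, u ∈ ℤⁿ with u ≥ 0, and x̂ ∈ ℤⁿ with 0 ≤ x̂ ≤ u. Then x̂ is the unique minimizer of ‖x‖₁ over {x ∈ ℤⁿ : 0 ≤ x ≤ u, Ax = Ax̂} if and only if for every nonzero v ∈ ℤⁿ with Av = 0, -u ≤ v ≤ u, and 0 ≤ v + x̂ ≤ u, it holds that ∑ᵢ vᵢ > 0. -/
theorem stmt16 (m n : ℕ) (A : Matrix (Fin m) (Fin n) ℝ)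
    (u : Fin n → ℤ) (hu : ∀ i, 0 ≤ u i)
    (xhat : Fin n → ℤ) (hxhat : ∀ i, 0 ≤ xhat i ∧ xhat i ≤ u i) :
    (∀ x : Fin n → ℤ, (∀ i, 0 ≤ x i ∧ x i ≤ u i) →
      A.mulVec (fun j => (x j : ℝ)) = A.mulVec (fun j => (xhat j : ℝ)) →
      x ≠ xhat → ∑ i, |xhat i| < ∑ i, |x i|)
    ↔ (∀ v : Fin n → ℤ, v ≠ 0 → A.mulVec (fun j => (v j : ℝ)) = 0 →
        (∀ i, -u i ≤ v i ∧ v i ≤ u i) →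
        (∀ i, 0 ≤ v i + xhat i ∧ v i + xhat i ≤ u i) → 0 < ∑ i, v i) := by
  constructor
  · intro h v hv hAv _ hbnd
    have hx : ∀ i, 0 ≤ v i + xhat i ∧ v i + xhat i ≤ u i := hbnd
    have hmul : A.mulVec (fun j => ((v j + xhat j : ℤ) : ℝ))
        = A.mulVec (fun j => (xhat j : ℝ)) := by
      have : (fun j => ((v j + xhat j : ℤ) : ℝ))
          = (fun j => (v j : ℝ)) + (fun j => (xhat j : ℝ)) := by
        funext j; push_cast; rfl
      rw [this, Matrix.mulVec_add, hAv, zero_add]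
    have hne : (fun i => v i + xhat i) ≠ xhat := by
      intro hcontra
      apply hv
      funext i
      have := congrFun hcontra i
      simpa using by linarith [congrFun hcontra i]
    have key := h (fun i => v i + xhat i) hx hmul hne
    have h1 : ∑ i, |xhat i| = ∑ i, xhat i :=
      Finset.sum_congr rfl fun i _ => abs_of_nonneg (hxhat i).1
    have h2 : ∑ i, |v i + xhat i| = ∑ i, (v i + xhat i) :=
      Finset.sum_congr rfl fun i _ => abs_of_nonneg (hx i).1
    rw [h1, h2, Finset.sum_add_distrib] at key
    linarith
  · intro h x hx hAx hne
    set v : Fin n → ℤ := fun i => x i - xhat i with hvdef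
    have hv : v ≠ 0 := by
      intro hc
      apply hne
      funext i
      have := congrFun hc i
      simp [hvdef] at this
      linarith
    have hAv : A.mulVec (fun j => (v j : ℝ)) = 0 := by
      have : (fun j => (v j : ℝ))
          = (fun j => (x j : ℝ)) - (fun j => (xhat j : ℝ)) := by
        funext j; simp [hvdef]
      rw [this, Matrix.mulVec_sub, hAx, sub_self]
    have key := h v hv hAv
      (fun i => ⟨by have := (hx i).1; have := (hxhat i).2; simp [hvdef]; linarith,
        by have := (hx i).2; have := (hxhat i).1; simp [hvdef]; linarith⟩)
      (fun i => ⟨by simp [hvdef]; linarith [(hx i).1], by simp [hvdef]; linarith [(hx i).2]⟩)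
    have h1 : ∑ i, |xhat i| = ∑ i, xhat i :=
      Finset.sum_congr rfl fun i _ => abs_of_nonneg (hxhat i).1
    have h2 : ∑ i, |x i| = ∑ i, x i :=
      Finset.sum_congr rfl fun i _ => abs_of_nonneg (hx i).1
    have h3 : ∑ i, v i = ∑ i, x i - ∑ i, xhat i := by
      simp [hvdef, Finset.sum_sub_distrib]
    rw [h1, h2]
    linarith [key, h3.symm ▸ key]
end

section
/- Let A ∈ ℝ^{m×n}, x̂ ∈ ℤⁿ with support contained in S ⊆ {1,…,n}. If for every nonzero v ∈ ℤⁿ with Av = 0 it holds that |∑_{i∈S} sign(x̂ᵢ)·vᵢ| < ∑_{i∉S}|vᵢ|, then x̂ is the unique minimizer of ‖x‖₁ over {x ∈ ℤⁿ : Ax = Ax̂}. -/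
lemma stmt17_aux (a b : ℤ) : |a| + a.sign * b ≤ |a + b| := by
  rcases lt_trichotomy a 0 with h | h | h
  · rw [Int.sign_eq_neg_one_of_neg h, abs_of_neg h]
    have := neg_abs_le (a + b)
    linarith
  · simp [h]
  · rw [Int.sign_eq_one_of_pos h, abs_of_pos h]
    have := le_abs_self (a + b)
    linarith

theorem stmt17 (m n : ℕ) (A : Matrix (Fin m) (Fin n) ℝ)
    (S : Finset (Fin n)) (xhat : Fin n → ℤ) (hsupp : ∀ i, xhat i ≠ 0 → i ∈ S)
    (hcond : ∀ v : Fin n → ℤ, v ≠ 0 → A.mulVec (fun j => (v j : ℝ)) = 0 →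
      |∑ i ∈ S, Int.sign (xhat i) * v i| < ∑ i ∈ Sᶜ, |v i|) :
    ∀ x : Fin n → ℤ,
      A.mulVec (fun j => (x j : ℝ)) = A.mulVec (fun j => (xhat j : ℝ)) →
      x ≠ xhat → ∑ i, |xhat i| < ∑ i, |x i| := by
  intro x hAx hne
  set v : Fin n → ℤ := fun i => x i - xhat i with hvdef
  have hv : v ≠ 0 := by
    intro h
    apply hne
    funext i
    have := congrFun h i
    simp [hvdef] at this
    linarith
  have hAv : A.mulVec (fun j => (v j : ℝ)) = 0 := by
    have hfun : (fun j => ((v j : ℤ) : ℝ))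
        = (fun j => (x j : ℝ)) - fun j => (xhat j : ℝ) := by
      funext j; simp [hvdef]
    rw [hfun, Matrix.mulVec_sub, hAx, sub_self]
  have hc := hcond v hv hAv
  have hzero : ∀ i ∈ Sᶜ, xhat i = 0 := by
    intro i hi
    by_contra h
    exact (Finset.mem_compl.mp hi) (hsupp i h)
  have h1 : ∑ i ∈ S, |xhat i| + ∑ i ∈ S, (xhat i).sign * v i ≤ ∑ i ∈ S, |x i| := by
    rw [← Finset.sum_add_distrib]
    apply Finset.sum_le_sum
    intro i _
    have := stmt17_aux (xhat i) (v i)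
    simpa [hvdef] using this
  have h2 : ∑ i ∈ Sᶜ, |v i| = ∑ i ∈ Sᶜ, |x i| := by
    apply Finset.sum_congr rfl
    intro i hi
    simp [hvdef, hzero i hi]
  have h3 : ∑ i, |xhat i| = ∑ i ∈ S, |xhat i| := by
    rw [← Finset.sum_add_sum_compl S (fun i => |xhat i|)]
    have : ∑ i ∈ Sᶜ, |xhat i| = 0 := by
      apply Finset.sum_eq_zero
      intro i hi
      simp [hzero i hi]
    rw [this, add_zero]
  have h4 : ∑ i, |x i| = ∑ i ∈ S, |x i| + ∑ i ∈ Sᶜ, |x i| :=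
    (Finset.sum_add_sum_compl S _).symm
  have h5 : -(∑ i ∈ S, (xhat i).sign * v i) ≤ |∑ i ∈ S, (xhat i).sign * v i| :=
    neg_le_abs _
  rw [h3, h4]
  linarith
end
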